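/- arXiv:1610.04826 — 3 statements merged into one kernel-verified Lean document; each statement's English description precedes it below -/
import Mathlib

section
/- For every real x ≥ 1, the Mertens function satisfies M(x) = Σ_{n ≤ x} μ(n) = Σ_{k=0}^{⌊log₂ x⌋} (−1)^k F_k(x), where F_k(x) = F_k(x,2). -/
/-!
Write `ζ = 1 + g`, where `g = ζ - 1` is the indicator of `n ≥ 2`. Expanding the `k`-fold
Dirichlet power of `g` over `k`-tuples shows that `f_k(n, 2) = g^{*k}(n)`, and this vanishes for
`n < 2^k` because a product of `k` factors `≥ 2` is at least `2^k`. Inverting `ζ` as a geometric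
series gives `μ = ∑_{k ≤ K} (-g)^{*k} + (-g)^{*(K+1)} * μ`; with `K = ⌊log₂ x⌋` the error term
vanishes at every `n ≤ x < 2^(K+1)`, and summing over `n ≤ x` gives the identity.
-/

open Finset

/-- `f k n l` is the number of ordered `k`-tuples `(i₁, …, i_k)` of integers
with each `i_j ≥ l` and `i₁ ⋯ i_k = n`.  (For `n ≥ 1` and `l ≥ 1` every such
factor lies in `[l, n]`, and for `k = 0` this gives `1` if `n = 1` and `0` otherwise.) -/
def f (k n l : ℕ) : ℕ :=
  ((Fintype.piFinset fun _ : Fin k => Finset.Icc l n).filter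
    fun v => ∏ i, v i = n).card

/-- `F k x l = ∑_{n ≤ x} f k n l`; it equals `0` for `x < 1` and `F 0 x l = 1` for `x ≥ 1`. -/
noncomputable def F (k : ℕ) (x : ℝ) (l : ℕ) : ℕ :=
  ∑ n ∈ Finset.Icc 1 ⌊x⌋₊, f k n l

open ArithmeticFunction
open scoped ArithmeticFunction.zeta ArithmeticFunction.Moebius

namespace ArithmeticFunction

lemma sub_apply {R : Type*} [AddGroup R] (φ ψ : ArithmeticFunction R) (n : ℕ) :
    (φ - ψ) n = φ n - ψ n := by
  rw [sub_eq_add_neg, add_apply, neg_apply, sub_eq_add_neg]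

lemma sum_apply {ι R : Type*} [AddCommMonoid R] (s : Finset ι) (φ : ι → ArithmeticFunction R)
    (n : ℕ) : (∑ i ∈ s, φ i) n = ∑ i ∈ s, φ i n :=
  map_sum (⟨⟨fun h => h n, rfl⟩, fun _ _ => rfl⟩ : ArithmeticFunction R →+ R) φ s

theorem pow_apply_eq_sum_finMulAntidiag {R : Type*} [CommSemiring R]
    (h : ArithmeticFunction R) (k n : ℕ) :
    (h ^ k) n = ∑ v ∈ Nat.finMulAntidiag k n, ∏ i, h (v i) := by
  induction k generalizing n with
  | zero =>
    rw [pow_zero, one_apply]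
    rcases eq_or_ne n 1 with rfl | hn
    · rw [Nat.finMulAntidiag_one, sum_singleton, if_pos rfl, univ_eq_empty, prod_empty]
    · rw [Nat.finMulAntidiag_zero_left hn, sum_empty, if_neg hn]
  | succ k ih =>
    simp_rw [pow_succ', mul_apply, ih, mul_sum, Fin.prod_univ_succ]
    rw [sum_sigma']
    refine sum_bij' (fun x _ => Fin.cons x.1.1 x.2)
      (fun v _ => ⟨(v 0, ∏ i : Fin k, v i.succ), Fin.tail v⟩) ?_ ?_ ?_ ?_ ?_
    · rintro ⟨⟨a, b⟩, w⟩ hx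
      simp only [mem_sigma, Nat.mem_divisorsAntidiagonal, Nat.mem_finMulAntidiag] at hx ⊢
      simp [Fin.prod_univ_succ, hx]
    · intro v hv
      simp only [mem_sigma, Nat.mem_divisorsAntidiagonal, Nat.mem_finMulAntidiag] at hv ⊢
      rw [Fin.prod_univ_succ] at hv
      exact ⟨hv, rfl, fun h0 => hv.2 (by rw [← hv.1, h0, mul_zero])⟩
    · rintro ⟨⟨a, b⟩, w⟩ hx
      simp only [mem_sigma, Nat.mem_finMulAntidiag] at hx
      simp [hx.2.1]
    · intro v _
      simp
    · intro x _
      simp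

end ArithmeticFunction

lemma f_two_eq_card_filter_finMulAntidiag (k n : ℕ) :
    f k n 2 = #{v ∈ Nat.finMulAntidiag k n | ∀ i, 2 ≤ v i} := by
  unfold f
  congr 1
  ext v
  simp only [mem_filter, Fintype.mem_piFinset, mem_Icc, Nat.mem_finMulAntidiag]
  constructor
  · rintro ⟨hv, hprod⟩
    refine ⟨⟨hprod, ?_⟩, fun i => (hv i).1⟩
    rw [← hprod, prod_ne_zero_iff]
    exact fun i _ => by linarith [(hv i).1]
  · rintro ⟨⟨hprod, hn⟩, hv⟩
    refine ⟨fun i => ⟨hv i, Nat.le_of_dvd (Nat.pos_of_ne_zero hn) ?_⟩, hprod⟩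
    exact hprod ▸ dvd_prod_of_mem v (mem_univ i)

lemma f_two_eq_zero_of_lt_two_pow {k n : ℕ} (hn : n < 2 ^ k) : f k n 2 = 0 := by
  rw [f_two_eq_card_filter_finMulAntidiag, card_eq_zero, filter_eq_empty_iff]
  intro v hv hv2
  have : 2 ^ k ≤ n :=
    calc 2 ^ k = ∏ _i : Fin k, 2 := by simp
      _ ≤ ∏ i, v i := prod_le_prod' fun i _ => hv2 i
      _ = n := Nat.prod_eq_of_mem_finMulAntidiag hv
  omega

lemma one_sub_zeta_apply (n : ℕ) :
    (1 - (ζ : ArithmeticFunction ℤ)) n = if 2 ≤ n then -1 else 0 := by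
  rw [ArithmeticFunction.sub_apply, natCoe_apply, zeta_apply]
  rcases n with _ | _ | n <;> simp

lemma one_sub_zeta_pow_apply (k n : ℕ) :
    ((1 - (ζ : ArithmeticFunction ℤ)) ^ k) n = (-1) ^ k * f k n 2 := by
  simp_rw [pow_apply_eq_sum_finMulAntidiag, one_sub_zeta_apply, Fintype.prod_ite_zero,
    prod_const, card_univ, Fintype.card_fin, f_two_eq_card_filter_finMulAntidiag]
  rw [sum_ite, sum_const_zero, add_zero, sum_const, nsmul_eq_mul, mul_comm]

lemma moebius_eq_geom_sum_add (K : ℕ) :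
    (μ : ArithmeticFunction ℤ) = ∑ k ∈ range K, (1 - (ζ : ArithmeticFunction ℤ)) ^ k +
      (1 - (ζ : ArithmeticFunction ℤ)) ^ K * μ := by
  have h := congrArg (· * (μ : ArithmeticFunction ℤ)) <|
    geom_sum_mul_neg (1 - (ζ : ArithmeticFunction ℤ)) K
  simp only [sub_sub_cancel, mul_assoc, coe_zeta_mul_moebius, mul_one] at h
  rw [h]
  ring

lemma moebius_apply_eq_sum {K n : ℕ} (hn : n < 2 ^ K) :
    (μ : ArithmeticFunction ℤ) n = ∑ k ∈ range K, (-1) ^ k * (f k n 2 : ℤ) := by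
  have htail : ((1 - (ζ : ArithmeticFunction ℤ)) ^ K * μ) n = 0 := by
    rw [mul_apply]
    refine sum_eq_zero fun p hp => ?_
    have hp1 : p.1 < 2 ^ K :=
      (Nat.divisor_le (Nat.fst_mem_divisors_of_mem_antidiagonal hp)).trans_lt hn
    rw [one_sub_zeta_pow_apply, f_two_eq_zero_of_lt_two_pow hp1, Nat.cast_zero, mul_zero,
      zero_mul]
  rw [moebius_eq_geom_sum_add K, ArithmeticFunction.add_apply, htail, add_zero,
    ArithmeticFunction.sum_apply]
  simp_rw [one_sub_zeta_pow_apply]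

lemma natFloor_lt_pow_natFloor_logb_add_one {b : ℕ} (hb : 1 < b) (x : ℝ) :
    ⌊x⌋₊ < b ^ (⌊Real.logb b x⌋₊ + 1) := by
  rcases le_or_gt x 0 with hx | hx
  · rw [Nat.floor_of_nonpos hx]
    positivity
  · rw [Nat.floor_lt hx.le]
    push_cast
    rw [← Real.rpow_natCast, ← Real.logb_lt_iff_lt_rpow (by exact_mod_cast hb) hx]
    push_cast
    exact Nat.lt_floor_add_one _

theorem stmt8_general (x : ℝ) :
    ∑ n ∈ Finset.Icc 1 ⌊x⌋₊, ArithmeticFunction.moebius n =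
      ∑ k ∈ Finset.range (⌊Real.logb 2 x⌋₊ + 1), (-1 : ℤ) ^ k * (F k x 2 : ℤ) := by
  have hfloor : ⌊x⌋₊ < 2 ^ (⌊Real.logb 2 x⌋₊ + 1) := by
    simpa using natFloor_lt_pow_natFloor_logb_add_one one_lt_two x
  rw [sum_congr rfl fun n hn => moebius_apply_eq_sum ((mem_Icc.1 hn).2.trans_lt hfloor), sum_comm]
  simp_rw [F, Nat.cast_sum, mul_sum]

theorem stmt8 (x : ℝ) (hx : 1 ≤ x) :
    ∑ n ∈ Finset.Icc 1 ⌊x⌋₊, ArithmeticFunction.moebius n =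
      ∑ k ∈ Finset.range (⌊Real.logb 2 x⌋₊ + 1), (-1 : ℤ) ^ k * (F k x 2 : ℤ) :=
  stmt8_general x
end

section
/- For every real x ≥ 1, every positive integer l, and every integer k ≥ 2, F_k(x,l) = Σ_{m=l}^{⌊x^{1/k}⌋} Σ_{i=1}^{k} C(k,i) · F_{k−i}(x/m^i, m+1). -/
open Finset

/-!
With `N = ⌊x⌋`, `F k x l` counts the `k`-tuples with entries `≥ l` and product `≤ N`. Classify such
a tuple by its least entry `m` and the set `S` of positions where `m` is attained: `m ^ k ≤ N`
forces `m ≤ x ^ (1 / k)`, and removing the `i = |S|` entries equal to `m` leaves an arbitrary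
`(k - i)`-tuple with entries `≥ m + 1` and product `≤ N / m ^ i`, counted by
`F (k - i) (x / m ^ i) (m + 1)` since `⌊x / m ^ i⌋ = N / m ^ i`. There are `k.choose i` choices
of `S`.
-/

section BoundedTuples

variable {ι κ : Type*} [Fintype ι] [Fintype κ]

lemma apply_le_prod_of_one_le {v : ι → ℕ} (hv : ∀ j, 1 ≤ v j) (j : ι) : v j ≤ ∏ i, v i :=
  single_le_prod' (fun i _ => hv i) (mem_univ j)

variable [DecidableEq ι] [DecidableEq κ]

def boundedTuples (ι : Type*) [Fintype ι] [DecidableEq ι] (N l : ℕ) : Finset (ι → ℕ) :=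
  (Fintype.piFinset fun _ => Icc l N).filter fun v => ∏ j, v j ≤ N

lemma mem_boundedTuples {N l : ℕ} (hl : 1 ≤ l) {v : ι → ℕ} :
    v ∈ boundedTuples ι N l ↔ (∀ j, l ≤ v j) ∧ ∏ j, v j ≤ N := by
  simp only [boundedTuples, mem_filter, Fintype.mem_piFinset, mem_Icc]
  refine ⟨fun h => ⟨fun j => (h.1 j).1, h.2⟩, fun h => ⟨fun j => ⟨h.1 j, ?_⟩, h.2⟩⟩
  exact (apply_le_prod_of_one_le (fun i => hl.trans (h.1 i)) j).trans h.2

lemma card_boundedTuples_congr (e : ι ≃ κ) (N l : ℕ) :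
    #(boundedTuples ι N l) = #(boundedTuples κ N l) := by
  refine card_nbij' (fun v => v ∘ e.symm) (fun w => w ∘ e) ?_ ?_ ?_ ?_
  · intro v hv
    simp only [boundedTuples, coe_filter, Set.mem_ofPred_eq, Fintype.mem_piFinset] at hv ⊢
    exact ⟨fun j => hv.1 _, (Equiv.prod_comp e.symm v).trans_le hv.2⟩
  · intro w hw
    simp only [boundedTuples, coe_filter, Set.mem_ofPred_eq, Fintype.mem_piFinset] at hw ⊢
    exact ⟨fun j => hw.1 _, (Equiv.prod_comp e w).trans_le hw.2⟩
  · intro v _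
    simp [Function.comp_def]
  · intro w _
    simp [Function.comp_def]

end BoundedTuples

lemma F_eq_card_boundedTuples {k l : ℕ} (hl : 0 < l) (x : ℝ) :
    F k x l = #(boundedTuples (Fin k) ⌊x⌋₊ l) := by
  have hprod : ∀ v ∈ boundedTuples (Fin k) ⌊x⌋₊ l, ∏ j, v j ∈ Icc 1 ⌊x⌋₊ := fun v hv => by
    rw [mem_boundedTuples hl] at hv
    exact mem_Icc.2 ⟨one_le_prod' fun j _ => hl.trans_le (hv.1 j), hv.2⟩
  rw [F, card_eq_sum_card_fiberwise hprod]
  refine sum_congr rfl fun n hn => congrArg card (Finset.ext fun v => ?_)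
  have hn := mem_Icc.1 hn
  simp only [mem_filter, mem_boundedTuples hl, Fintype.mem_piFinset, mem_Icc]
  constructor
  · rintro ⟨hv, rfl⟩
    exact ⟨⟨fun j => (hv j).1, hn.2⟩, rfl⟩
  · rintro ⟨⟨hv, -⟩, rfl⟩
    exact ⟨fun j => ⟨hv j, apply_le_prod_of_one_le (fun i => hl.trans_le (hv i)) j⟩, rfl⟩

section MinEntry

variable {ι : Type*} [Fintype ι] [Nonempty ι]

def minEntry (v : ι → ℕ) : ℕ :=
  univ.inf' univ_nonempty v

lemma minEntry_le (v : ι → ℕ) (j : ι) : minEntry v ≤ v j :=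
  inf'_le v (mem_univ j)

lemma le_minEntry {v : ι → ℕ} {a : ℕ} (h : ∀ j, a ≤ v j) : a ≤ minEntry v :=
  le_inf' _ _ fun j _ => h j

lemma exists_eq_minEntry (v : ι → ℕ) : ∃ j, v j = minEntry v := by
  obtain ⟨j, -, hj⟩ := exists_mem_eq_inf' univ_nonempty v
  exact ⟨j, hj.symm⟩

lemma minEntry_eq_and_filter_eq_iff {v : ι → ℕ} {m : ℕ} {s : Finset ι} (hs : s.Nonempty) :
    (minEntry v = m ∧ ({j | v j = m} : Finset ι) = s) ↔
      ∀ j, (j ∈ s → v j = m) ∧ (j ∉ s → m < v j) := by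
  constructor
  · rintro ⟨rfl, rfl⟩ j
    simp only [mem_filter, mem_univ, true_and]
    exact ⟨id, fun h => (minEntry_le v j).lt_of_ne (Ne.symm h)⟩
  · intro h
    obtain ⟨j₀, hj₀⟩ := hs
    have hmin : minEntry v = m :=
      le_antisymm ((h j₀).1 hj₀ ▸ minEntry_le v j₀) <| le_minEntry fun j => by
        by_cases hj : j ∈ s
        · exact ((h j).1 hj).ge
        · exact ((h j).2 hj).le
    refine ⟨hmin, Finset.ext fun j => ?_⟩
    simp only [mem_filter, mem_univ, true_and]
    exact ⟨fun hv => by_contra fun hj => ((h j).2 hj).ne' hv, (h j).1⟩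

end MinEntry

lemma prod_eq_pow_mul_prod_compl {ι M : Type*} [Fintype ι] [DecidableEq ι] [CommMonoid M]
    {v : ι → M} {s : Finset ι} {m : M} (h : ∀ j ∈ s, v j = m) :
    ∏ j, v j = m ^ #s * ∏ t : ↥sᶜ, v t := by
  rw [← prod_mul_prod_compl s v, prod_congr rfl h, prod_const, prod_coe_sort]

lemma mem_filter_minEntry_eq_and_filter_eq_iff {ι : Type*} [Fintype ι] [DecidableEq ι]
    [Nonempty ι] {N l m : ℕ} (hl : 1 ≤ l) (hlm : l ≤ m) {s : Finset ι} (hs : s.Nonempty)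
    {v : ι → ℕ} :
    v ∈ {v ∈ boundedTuples ι N l | minEntry v = m ∧ ({j | v j = m} : Finset ι) = s} ↔
      (∀ j, (j ∈ s → v j = m) ∧ (j ∉ s → m < v j)) ∧ ∏ j, v j ≤ N := by
  rw [mem_filter, minEntry_eq_and_filter_eq_iff hs, mem_boundedTuples hl]
  refine ⟨fun h => ⟨h.2, h.1.2⟩, fun h => ⟨⟨fun j => ?_, h.2⟩, h.1⟩⟩
  by_cases hj : j ∈ s
  · exact ((h.1 j).1 hj).symm ▸ hlm
  · exact hlm.trans ((h.1 j).2 hj).le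

lemma card_filter_minEntry_eq_and_filter_eq {ι : Type*} [Fintype ι] [DecidableEq ι]
    [Nonempty ι] {N l m : ℕ} (hl : 1 ≤ l) (hlm : l ≤ m) {s : Finset ι} (hs : s.Nonempty) :
    #{v ∈ boundedTuples ι N l | minEntry v = m ∧ ({j | v j = m} : Finset ι) = s} =
      #(boundedTuples ↥sᶜ (N / m ^ #s) (m + 1)) := by
  have hpow : 0 < m ^ #s := pow_pos (hl.trans hlm) _
  have hmem := fun v => mem_filter_minEntry_eq_and_filter_eq_iff (N := N) (v := v) hl hlm hs
  refine card_nbij' (fun v t => v t) (fun w j => if h : j ∈ s then m else w ⟨j, mem_compl.2 h⟩)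
    ?_ ?_ ?_ ?_
  · intro v hv
    obtain ⟨hpat, hprod⟩ := (hmem v).1 hv
    rw [prod_eq_pow_mul_prod_compl fun j hj => (hpat j).1 hj] at hprod
    rw [mem_coe, mem_boundedTuples (Nat.le_add_left 1 m)]
    exact ⟨fun t => (hpat t).2 (mem_compl.1 t.2),
      (Nat.le_div_iff_mul_le hpow).2 (by rwa [mul_comm])⟩
  · intro w hw
    rw [mem_coe, mem_boundedTuples (Nat.le_add_left 1 m)] at hw
    rw [mem_coe, hmem]
    refine ⟨fun j => ⟨fun hj => dif_pos hj, fun hj => ?_⟩, ?_⟩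
    · simpa only [dif_neg hj, Nat.lt_iff_add_one_le] using hw.1 ⟨j, mem_compl.2 hj⟩
    · rw [prod_eq_pow_mul_prod_compl fun j hj => dif_pos hj]
      calc m ^ #s * ∏ t : ↥sᶜ, (if h : (t : ι) ∈ s then m else w ⟨t, mem_compl.2 h⟩)
          = m ^ #s * ∏ t, w t := by
            congr 1
            exact prod_congr rfl fun t _ => dif_neg (mem_compl.1 t.2)
        _ ≤ m ^ #s * (N / m ^ #s) := Nat.mul_le_mul_left _ hw.2
        _ ≤ N := Nat.mul_div_le N _
  · intro v hv
    funext j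
    dsimp only
    split_ifs with hj
    · exact (((hmem v).1 hv).1 j).1 hj |>.symm
    · rfl
  · intro w _
    funext t
    exact dif_neg (mem_compl.1 t.2)

section Recursion

variable {ι : Type*} [Fintype ι] [DecidableEq ι] [Nonempty ι] {N l : ℕ}

lemma card_filter_minEntry_eq_and_card_eq (hl : 1 ≤ l) {m i : ℕ} (hlm : l ≤ m) (hi : 1 ≤ i) :
    #{v ∈ boundedTuples ι N l | minEntry v = m ∧ #{j | v j = m} = i} =
      (Fintype.card ι).choose i *
        #(boundedTuples (Fin (Fintype.card ι - i)) (N / m ^ i) (m + 1)) := by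
  have hmaps : ∀ v ∈ {v ∈ boundedTuples ι N l | minEntry v = m ∧ #{j | v j = m} = i},
      ({j | v j = m} : Finset ι) ∈ powersetCard i univ := fun v hv =>
    mem_powersetCard.2 ⟨subset_univ _, (mem_filter.1 hv).2.2⟩
  have hfiber : ∀ s ∈ powersetCard i (univ : Finset ι),
      #{v ∈ {v ∈ boundedTuples ι N l | minEntry v = m ∧ #{j | v j = m} = i} |
        ({j | v j = m} : Finset ι) = s} =
      #(boundedTuples (Fin (Fintype.card ι - i)) (N / m ^ i) (m + 1)) := by
    intro s hs
    obtain ⟨-, rfl⟩ := mem_powersetCard.1 hs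
    rw [filter_filter]
    have hpred : ∀ v : ι → ℕ, (minEntry v = m ∧ #{j | v j = m} = #s) ∧
        ({j | v j = m} : Finset ι) = s ↔ minEntry v = m ∧ ({j | v j = m} : Finset ι) = s :=
      fun v => ⟨fun h => ⟨h.1.1, h.2⟩, fun h => ⟨⟨h.1, h.2 ▸ rfl⟩, h.2⟩⟩
    rw [filter_congr fun v _ => hpred v,
      card_filter_minEntry_eq_and_filter_eq hl hlm (card_pos.1 hi)]
    refine card_boundedTuples_congr (Fintype.equivFinOfCardEq ?_) _ _
    rw [Fintype.card_coe, card_compl]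
  rw [card_eq_sum_card_fiberwise hmaps, sum_congr rfl hfiber, sum_const, card_powersetCard,
    card_univ, smul_eq_mul]

lemma card_boundedTuples_eq_sum (hl : 1 ≤ l) {M : ℕ} (hM : ∀ m, m ^ Fintype.card ι ≤ N → m ≤ M) :
    #(boundedTuples ι N l) = ∑ m ∈ Icc l M, ∑ i ∈ Icc 1 (Fintype.card ι),
      (Fintype.card ι).choose i *
        #(boundedTuples (Fin (Fintype.card ι - i)) (N / m ^ i) (m + 1)) := by
  have hmaps : ∀ v ∈ boundedTuples ι N l,
      (minEntry v, #{j | v j = minEntry v}) ∈ Icc l M ×ˢ Icc 1 (Fintype.card ι) := by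
    intro v hv
    rw [mem_boundedTuples hl] at hv
    obtain ⟨j, hj⟩ := exists_eq_minEntry v
    refine mem_product.2 ⟨mem_Icc.2 ⟨le_minEntry hv.1, hM _ ?_⟩,
      mem_Icc.2 ⟨card_pos.2 ⟨j, by simpa using hj⟩, card_filter_le _ _⟩⟩
    calc minEntry v ^ Fintype.card ι ≤ ∏ j, v j :=
          pow_card_le_prod _ _ _ fun j _ => minEntry_le v j
      _ ≤ N := hv.2
  rw [card_eq_sum_card_fiberwise hmaps, sum_product]
  refine sum_congr rfl fun m hm => sum_congr rfl fun i hi => ?_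
  rw [← card_filter_minEntry_eq_and_card_eq hl (mem_Icc.1 hm).1 (mem_Icc.1 hi).1]
  refine congrArg card (filter_congr fun v _ => ?_)
  rw [Prod.mk.injEq]
  exact and_congr_right fun h => by rw [h]

end Recursion

lemma le_floor_rpow_one_div_of_pow_le {x : ℝ} {k m : ℕ} (hk : k ≠ 0)
    (h : (m : ℝ) ^ k ≤ x) : m ≤ ⌊x ^ (1 / (k : ℝ))⌋₊ := by
  refine Nat.le_floor ?_
  calc (m : ℝ) = ((m : ℝ) ^ k) ^ (k⁻¹ : ℝ) := (Real.pow_rpow_inv_natCast m.cast_nonneg hk).symm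
    _ ≤ x ^ (1 / (k : ℝ)) := by
      rw [one_div]
      exact Real.rpow_le_rpow (by positivity) h (by positivity)

theorem stmt13 (x : ℝ) (hx : 1 ≤ x) (l k : ℕ) (hl : 0 < l) (hk : 2 ≤ k) :
    F k x l =
      ∑ m ∈ Finset.Icc l ⌊x ^ (1 / (k : ℝ))⌋₊,
        ∑ i ∈ Finset.Icc 1 k,
          Nat.choose k i * F (k - i) (x / (m : ℝ) ^ i) (m + 1) := by
  have : Nonempty (Fin k) := ⟨⟨0, by omega⟩⟩
  have hM : ∀ m, m ^ Fintype.card (Fin k) ≤ ⌊x⌋₊ → m ≤ ⌊x ^ (1 / (k : ℝ))⌋₊ := by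
    intro m hm
    rw [Fintype.card_fin, ← Nat.cast_le (α := ℝ)] at hm
    refine le_floor_rpow_one_div_of_pow_le (by omega) ?_
    exact_mod_cast hm.trans (Nat.floor_le (zero_le_one.trans hx))
  rw [F_eq_card_boundedTuples hl, card_boundedTuples_eq_sum hl hM, Fintype.card_fin]
  refine sum_congr rfl fun m _ => sum_congr rfl fun i _ => ?_
  rw [F_eq_card_boundedTuples m.succ_pos, ← Nat.cast_pow, Nat.floor_div_natCast]
end

section
/- For every positive integer n and every integer k ≥ 0, d_k(n) = Σ_{i=0}^{⌊log₂ n⌋} C(k,i) f_i(n), where d_k(n) = f_k(n,1) and f_i(n) = f_i(n,2); and conversely f_k(n) = Σ_{i=0}^{k} (−1)^{k−i} C(k,i) d_i(n). -/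
open Finset

/-! In the monoid algebra `ℤ[ℕ]` of the multiplicative monoid `ℕ`, let
`P_l = X^l + X^(l+1) + ⋯ + X^n`. Expanding `P_l^k` shows that its coefficient at `X^n` is
`f_k(n, l)`. For `n ≥ 1` we have `P_1 = P_2 + 1`, so both identities are the binomial theorem
for `(P_2 + 1)^k` and `(P_1 - 1)^k`, read off at `X^n`. The first sum may be cut at
`⌊log₂ n⌋` because `f_i(n) = 0` as soon as `2^i > n`. -/

open MonoidAlgebra

theorem MonoidAlgebra.coeff_sum_single_one_pow {R M : Type*} [CommSemiring R] [CommMonoid M]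
    [DecidableEq M] (s : Finset M) (k : ℕ) (m : M) :
    ((∑ a ∈ s, single a (1 : R)) ^ k).coeff m =
      #{v ∈ Fintype.piFinset fun _ : Fin k => s | ∏ i, v i = m} := by
  rw [← Fin.prod_const, prod_univ_sum]
  simp [coeff_sum, Finsupp.single_apply, sum_boole]

theorem add_intCast_pow {A : Type*} [CommRing A] (x : A) (c : ℤ) (k : ℕ) :
    (x + c) ^ k = ∑ i ∈ range (k + 1), (c ^ (k - i) * k.choose i) • x ^ i := by
  rw [add_pow]
  refine sum_congr rfl fun i _ => ?_
  rw [zsmul_eq_mul]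
  push_cast
  ring

theorem MonoidAlgebra.coeff_add_intCast_pow {M : Type*} [CommMonoid M] (x : MonoidAlgebra ℤ M)
    (c : ℤ) (k : ℕ) (m : M) :
    ((x + c) ^ k).coeff m = ∑ i ∈ range (k + 1), c ^ (k - i) * k.choose i * (x ^ i).coeff m := by
  simp only [add_intCast_pow, coeff_sum, Finsupp.finsetSum_apply, coeff_smul_apply, smul_eq_mul]

noncomputable def iccSum (l n : ℕ) : MonoidAlgebra ℤ ℕ := ∑ a ∈ Icc l n, single a 1

theorem f_eq_coeff_iccSum_pow (k n l : ℕ) : (f k n l : ℤ) = (iccSum l n ^ k).coeff n :=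
  (coeff_sum_single_one_pow _ k n).symm

theorem iccSum_one_eq_iccSum_two_add_one {n : ℕ} (hn : 0 < n) :
    iccSum 1 n = iccSum 2 n + ((1 : ℤ) : MonoidAlgebra ℤ ℕ) := by
  rw [iccSum, ← insert_Icc_add_one_left_eq_Icc hn, sum_insert (by simp), add_comm, iccSum]
  simp [one_def]

theorem f_eq_zero_of_lt_pow {k n l : ℕ} (h : n < l ^ k) : f k n l = 0 := by
  rw [f, card_eq_zero, filter_eq_empty_iff]
  intro v hv hprod
  simp only [Fintype.mem_piFinset, mem_Icc] at hv
  have : l ^ k ≤ n := by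
    simpa [← hprod] using pow_card_le_prod univ v l fun i _ => (hv i).1
  omega

theorem f_one_eq_sum_choose_mul {n : ℕ} (hn : 0 < n) (k : ℕ) :
    f k n 1 = ∑ i ∈ range (k + 1), k.choose i * f i n 2 := by
  have h := f_eq_coeff_iccSum_pow k n 1
  rw [iccSum_one_eq_iccSum_two_add_one hn, coeff_add_intCast_pow] at h
  simp only [one_pow, one_mul, ← f_eq_coeff_iccSum_pow] at h
  exact_mod_cast h

theorem f_two_eq_alternating_sum {n : ℕ} (hn : 0 < n) (k : ℕ) :
    (f k n 2 : ℤ) = ∑ i ∈ range (k + 1), (-1 : ℤ) ^ (k - i) * k.choose i * f i n 1 := by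
  have hsplit : iccSum 2 n = iccSum 1 n + ((-1 : ℤ) : MonoidAlgebra ℤ ℕ) := by
    rw [iccSum_one_eq_iccSum_two_add_one hn]
    push_cast
    ring
  rw [f_eq_coeff_iccSum_pow, hsplit, coeff_add_intCast_pow]
  simp only [← f_eq_coeff_iccSum_pow]

theorem stmt16 (n : ℕ) (hn : 0 < n) (k : ℕ) :
    f k n 1 = ∑ i ∈ Finset.range (Nat.log 2 n + 1), Nat.choose k i * f i n 2 ∧
    (f k n 2 : ℤ) =
      ∑ i ∈ Finset.range (k + 1),
        (-1 : ℤ) ^ (k - i) * (Nat.choose k i : ℤ) * (f i n 1 : ℤ) := by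
  refine ⟨?_, f_two_eq_alternating_sum hn k⟩
  have hchoose : ∀ i ≥ k + 1, k.choose i * f i n 2 = 0 := fun i hi => by
    rw [Nat.choose_eq_zero_of_lt hi, zero_mul]
  have hlog : ∀ i ≥ Nat.log 2 n + 1, k.choose i * f i n 2 = 0 := fun i hi => by
    rw [f_eq_zero_of_lt_pow (Nat.lt_pow_of_log_lt one_lt_two hi), mul_zero]
  rw [f_one_eq_sum_choose_mul hn,
    ← eventually_constant_sum hchoose (Nat.le_add_right _ (Nat.log 2 n + 1)),
    eventually_constant_sum hlog (Nat.le_add_left _ _)]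
end
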